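/- The unit sphere is flow-invariant: for all real parameters α₁, α₂, λ₁, λ₂, if u : ℝ → ℝ⁴ is differentiable with u'(t) = X(u(t)) for all t ∈ ℝ and ‖u(0)‖ = 1, then ‖u(t)‖ = 1 for all t ∈ ℝ. -/

import Mathlib

/-!
Since `⟪X x, x⟫ = ‖x‖² (1 - ‖x‖²)`, along a solution the quantity `g = ‖u‖² - 1` solves the
linear equation `g' = -2 ‖u‖² g`, hence `g t = g 0 · exp (-2 ∫₀ᵗ ‖u‖²)`, which vanishes when
`g 0 = 0`.
-/

/-- The vector field `X` of equation (1), with parameters `α₁ α₂` and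
symmetry-breaking parameters `lam₁ lam₂` (called `λ₁ λ₂` in the paper). -/
noncomputable def Xfield (α₁ α₂ lam₁ lam₂ : ℝ) (x : EuclideanSpace ℝ (Fin 4)) :
    EuclideanSpace ℝ (Fin 4) :=
  let x₁ := x 0; let x₂ := x 1; let x₃ := x 2; let x₄ := x 3
  let r2 := x₁ ^ 2 + x₂ ^ 2 + x₃ ^ 2 + x₄ ^ 2
  WithLp.toLp 2 ![x₁ * (1 - r2) - x₂ - α₁ * x₁ * x₄ + α₂ * x₁ * x₄ ^ 2 + lam₂ * x₃ ^ 2 * x₄,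
    x₂ * (1 - r2) + x₁ - α₁ * x₂ * x₄ + α₂ * x₂ * x₄ ^ 2,
    x₃ * (1 - r2) + α₁ * x₃ * x₄ + α₂ * x₃ * x₄ ^ 2 + lam₁ * x₁ * x₂ * x₄ - lam₂ * x₁ * x₃ * x₄,
    x₄ * (1 - r2) - α₁ * (x₃ ^ 2 - x₁ ^ 2 - x₂ ^ 2) - α₂ * x₄ * (x₁ ^ 2 + x₂ ^ 2 + x₃ ^ 2)
      - lam₁ * x₁ * x₂ * x₃]

open Real InnerProductSpace

theorem eq_mul_exp_integral_of_hasDerivAt {g a : ℝ → ℝ} (ha : Continuous a)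
    (hg : ∀ t, HasDerivAt g (a t * g t) t) (t : ℝ) :
    g t = g 0 * exp (∫ s in (0 : ℝ)..t, a s) := by
  set A : ℝ → ℝ := fun t => ∫ s in (0 : ℝ)..t, a s
  have hA : ∀ t, HasDerivAt A (a t) t := fun t => (ha.integral_hasStrictDerivAt 0 t).hasDerivAt
  -- `exp (-A)` is an integrating factor
  have hF : ∀ t, HasDerivAt (fun t => g t * exp (-A t)) 0 t := fun t => by
    refine ((hg t).mul (hA t).neg.exp).congr_deriv ?_
    ring
  have hconst := is_const_of_deriv_eq_zero (fun t => (hF t).differentiableAt)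
    (fun t => (hF t).deriv) t 0
  simp only [A, intervalIntegral.integral_same, neg_zero, exp_zero, mul_one] at hconst
  rw [← hconst, mul_assoc, ← exp_add, neg_add_cancel, exp_zero, mul_one]

theorem norm_eq_one_of_hasDerivAt_of_inner_eq {E : Type*} [NormedAddCommGroup E]
    [InnerProductSpace ℝ E] {f : E → E} {φ : E → ℝ} (hφ : Continuous φ)
    (hf : ∀ x, ⟪f x, x⟫_ℝ = φ x * (1 - ‖x‖ ^ 2)) {u : ℝ → E}
    (hu : ∀ t, HasDerivAt u (f (u t)) t) (h0 : ‖u 0‖ = 1) (t : ℝ) : ‖u t‖ = 1 := by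
  have hu_cont : Continuous u := continuous_iff_continuousAt.2 fun t => (hu t).continuousAt
  have hg : ∀ t, HasDerivAt (fun t => ‖u t‖ ^ 2 - 1)
      (-2 * φ (u t) * (‖u t‖ ^ 2 - 1)) t := fun t => by
    refine ((hu t).norm_sq.sub_const 1).congr_deriv ?_
    rw [real_inner_comm, hf]
    ring
  have hsq := eq_mul_exp_integral_of_hasDerivAt (by fun_prop) hg t
  rw [h0, one_pow, sub_self, zero_mul, sub_eq_zero] at hsq
  exact (pow_eq_one_iff_of_nonneg (norm_nonneg _) two_ne_zero).1 hsq

theorem inner_Xfield_self (α₁ α₂ lam₁ lam₂ : ℝ) (x : EuclideanSpace ℝ (Fin 4)) :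
    ⟪Xfield α₁ α₂ lam₁ lam₂ x, x⟫_ℝ = ‖x‖ ^ 2 * (1 - ‖x‖ ^ 2) := by
  simp only [EuclideanSpace.real_norm_sq_eq, Fin.sum_univ_four, PiLp.inner_apply,
    RCLike.inner_apply, conj_trivial, Xfield, Fin.isValue, Matrix.cons_val_zero,
    Matrix.cons_val_one, Matrix.cons_val]
  ring

/-- The unit sphere is flow-invariant for the flow of `X`. -/
theorem stmt1 (α₁ α₂ lam₁ lam₂ : ℝ) (u : ℝ → EuclideanSpace ℝ (Fin 4))
    (hu : ∀ t : ℝ, HasDerivAt u (Xfield α₁ α₂ lam₁ lam₂ (u t)) t)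
    (h0 : ‖u 0‖ = 1) :
    ∀ t : ℝ, ‖u t‖ = 1 :=
  norm_eq_one_of_hasDerivAt_of_inner_eq (continuous_norm.pow 2)
    (inner_Xfield_self α₁ α₂ lam₁ lam₂) hu h0
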